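/- arXiv:1207.5313 — 4 statements merged into one kernel-verified Lean document; each statement's English description precedes it below -/
import Mathlib

section
/- For any vector α in R^{dm} partitioned into d groups of size m, if α lies in the cone C = {α : Σ_{j∉T*} ||α_{G_j}|| ≤ 21 Σ_{j∈T*} ||α_{G_j}||} for a subset T* of {1,...,d} with |T*| = s*, and α is decomposed into groups of indices T_0, T_1, ..., T_L where T_0 contains the s* indices j with largest ||α_{G_j}||, T_1 the next s* largest among the rest, and so on, then Σ_{l=0}^{L} ||α_{G_{T_l}}|| ≤ 23 ||α_{G_{T_0}}||. -/
open Finset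

/-!
With `b j` the norm of the `j`-th block, every block of `T (l + 1)` is at most the average of the
blocks of `T l`, so `‖α_{G_{T_{l+1}}}‖ ≤ (∑_{j ∈ T_l} b j) / √s*` and the tail `l ≥ 1` of the sum is
at most `(∑_j b j) / √s*`. The cone condition and Cauchy–Schwarz bound `∑_j b j` by
`22 ∑_{j ∈ T*} b j ≤ 22 √s* ‖α_{G_{T*}}‖`, and `‖α_{G_{T*}}‖ ≤ ‖α_{G_{T_0}}‖` since `T_0` collects
the `s*` largest blocks.
-/

variable {ι : Type*}

lemma sqrt_card_mul_sqrt_sum_sq_le_sum {b : ι → ℝ} (hb : 0 ≤ b) {S S' : Finset ι}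
    (hcard : #S' ≤ #S) (hle : ∀ j ∈ S', ∀ j' ∈ S, b j ≤ b j') :
    √(#S : ℝ) * √(∑ j ∈ S', b j ^ 2) ≤ ∑ j ∈ S, b j := by
  set M := ∑ j ∈ S, b j
  have hM : 0 ≤ M := sum_nonneg fun j _ => hb j
  have hj : ∀ j ∈ S', (#S * b j) ^ 2 ≤ M ^ 2 := fun j hj => by
    have h := card_nsmul_le_sum S b (b j) (hle j hj)
    rw [nsmul_eq_mul] at h
    exact pow_le_pow_left₀ (mul_nonneg (Nat.cast_nonneg _) (hb j)) h 2
  have hsq : (#S : ℝ) * ∑ j ∈ S', b j ^ 2 ≤ M ^ 2 := by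
    rcases (Nat.cast_nonneg (α := ℝ) #S).eq_or_lt with h0 | hpos
    · rw [← h0, zero_mul]
      positivity
    refine le_of_mul_le_mul_left ?_ hpos
    calc (#S : ℝ) * (#S * ∑ j ∈ S', b j ^ 2) = ∑ j ∈ S', (#S * b j) ^ 2 := by
          rw [← mul_assoc, mul_sum]
          exact sum_congr rfl fun j _ => by ring
      _ ≤ #S' * M ^ 2 := by simpa using sum_le_card_nsmul S' _ _ hj
      _ ≤ #S * M ^ 2 := by gcongr
  rw [← Real.sqrt_mul (Nat.cast_nonneg _), ← Real.sqrt_sq hM]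
  exact Real.sqrt_le_sqrt hsq

lemma sqrt_mul_sum_sqrt_sum_sq_le_sum [Fintype ι] {b : ι → ℝ} (hb : 0 ≤ b) {s L : ℕ}
    {T : ℕ → Finset ι} (hdisj : (range L : Set ℕ).PairwiseDisjoint T)
    (hcard : ∀ l < L, #(T l) = s) (hcard_succ : ∀ l < L, #(T (l + 1)) ≤ s)
    (horder : ∀ l < L, ∀ j ∈ T (l + 1), ∀ j' ∈ T l, b j ≤ b j') :
    √(s : ℝ) * ∑ l ∈ range L, √(∑ j ∈ T (l + 1), b j ^ 2) ≤ ∑ j, b j := by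
  classical
  calc √(s : ℝ) * ∑ l ∈ range L, √(∑ j ∈ T (l + 1), b j ^ 2)
      ≤ ∑ l ∈ range L, ∑ j ∈ T l, b j := by
        rw [mul_sum]
        refine sum_le_sum fun l hl => ?_
        have hl := mem_range.1 hl
        rw [← hcard l hl]
        exact sqrt_card_mul_sqrt_sum_sq_le_sum hb (hcard l hl ▸ hcard_succ l hl) (horder l hl)
    _ = ∑ j ∈ (range L).biUnion T, b j := (sum_biUnion hdisj).symm
    _ ≤ ∑ j, b j := sum_le_univ_sum_of_nonneg hb

lemma sum_le_sqrt_card_mul_sqrt_sum_sq {b : ι → ℝ} (hb : 0 ≤ b) (S : Finset ι) :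
    ∑ j ∈ S, b j ≤ √(#S : ℝ) * √(∑ j ∈ S, b j ^ 2) := by
  rw [← Real.sqrt_mul (Nat.cast_nonneg _),
    Real.le_sqrt (sum_nonneg fun j _ => hb j) (by positivity)]
  exact sq_sum_le_card_mul_sum_sq

lemma sum_le_sum_of_card_le_of_forall_notMem_le [DecidableEq ι] {f : ι → ℝ} (hf : 0 ≤ f)
    {S T : Finset ι} (hcard : #S ≤ #T) (hT : ∀ j ∈ T, ∀ j' ∉ T, f j' ≤ f j) :
    ∑ j ∈ S, f j ≤ ∑ j ∈ T, f j := by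
  rw [← sum_inter_add_sum_sdiff S T, ← sum_inter_add_sum_sdiff T S, inter_comm]
  gcongr ?_ + ?_
  · exact le_rfl
  rcases (T \ S).eq_empty_or_nonempty with hempty | hne
  · have hsdiff : #(S \ T) ≤ #(T \ S) := card_sdiff_le_card_sdiff_iff.2 hcard
    rw [hempty, card_empty, Nat.le_zero, card_eq_zero] at hsdiff
    simp [hsdiff, hempty]
  obtain ⟨j₀, hj₀, hmin⟩ := exists_min_image (T \ S) f hne
  calc ∑ j ∈ S \ T, f j ≤ #(S \ T) • f j₀ :=
        sum_le_card_nsmul _ _ _ fun j hj => hT j₀ (mem_sdiff.1 hj₀).1 j (mem_sdiff.1 hj).2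
    _ ≤ #(T \ S) • f j₀ := nsmul_le_nsmul_left (hf j₀) (card_sdiff_le_card_sdiff_iff.2 hcard)
    _ ≤ ∑ j ∈ T \ S, f j := card_nsmul_le_sum _ _ _ hmin

theorem sum_sqrt_sum_sq_le_of_cone [Fintype ι] [DecidableEq ι] {b : ι → ℝ} (hb : 0 ≤ b)
    {c : ℝ} (hc : 0 ≤ c) {s L : ℕ} (hs : 0 < s) {Tstar : Finset ι} (hTstar : #Tstar = s)
    (hcone : ∑ j ∈ Tstarᶜ, b j ≤ c * ∑ j ∈ Tstar, b j) {T : ℕ → Finset ι}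
    (hdisj : (range L : Set ℕ).PairwiseDisjoint T) (hcard : ∀ l < L, #(T l) = s)
    (hcardL : #(T L) ≤ s) (horder : ∀ l < L, ∀ j ∈ T (l + 1), ∀ j' ∈ T l, b j ≤ b j')
    (hmax : ∀ j ∈ T 0, ∀ j' ∉ T 0, b j' ≤ b j) :
    ∑ l ∈ range (L + 1), √(∑ j ∈ T l, b j ^ 2) ≤ (c + 2) * √(∑ j ∈ T 0, b j ^ 2) := by
  rw [sum_range_succ']
  rcases L.eq_zero_or_pos with rfl | hL
  · simp only [range_zero, sum_empty, zero_add]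
    nlinarith [Real.sqrt_nonneg (∑ j ∈ T 0, b j ^ 2)]
  have hcard_succ : ∀ l < L, #(T (l + 1)) ≤ s := fun l hl => by
    rcases (show l + 1 ≤ L from hl).eq_or_lt with h | h
    · rwa [h]
    · exact (hcard _ h).le
  have hTstar_le : √(∑ j ∈ Tstar, b j ^ 2) ≤ √(∑ j ∈ T 0, b j ^ 2) :=
    Real.sqrt_le_sqrt <| sum_le_sum_of_card_le_of_forall_notMem_le (fun j => sq_nonneg (b j))
      (by rw [hTstar, hcard 0 hL]) fun j hj j' hj' => pow_le_pow_left₀ (hb j') (hmax j hj j' hj') 2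
  have htail : √(s : ℝ) * ∑ l ∈ range L, √(∑ j ∈ T (l + 1), b j ^ 2)
      ≤ √(s : ℝ) * ((c + 1) * √(∑ j ∈ T 0, b j ^ 2)) :=
    calc √(s : ℝ) * ∑ l ∈ range L, √(∑ j ∈ T (l + 1), b j ^ 2) ≤ ∑ j, b j :=
          sqrt_mul_sum_sqrt_sum_sq_le_sum hb hdisj hcard hcard_succ horder
      _ = ∑ j ∈ Tstarᶜ, b j + ∑ j ∈ Tstar, b j := (sum_compl_add_sum Tstar b).symm
      _ ≤ (c + 1) * ∑ j ∈ Tstar, b j := by linarith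
      _ ≤ (c + 1) * (√(s : ℝ) * √(∑ j ∈ T 0, b j ^ 2)) := by
          gcongr
          exact (hTstar ▸ sum_le_sqrt_card_mul_sqrt_sum_sq hb Tstar).trans (by gcongr)
      _ = √(s : ℝ) * ((c + 1) * √(∑ j ∈ T 0, b j ^ 2)) := by ring
  have := le_of_mul_le_mul_left htail (Real.sqrt_pos.2 (Nat.cast_pos.2 hs))
  linarith

theorem stmt_0_general
    (d m sstar L : ℕ) (hs : 0 < sstar)
    (α : Fin d → Fin m → ℝ)
    (Tstar : Finset (Fin d)) (hTstar : Tstar.card = sstar)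
    -- cone condition
    (hcone : ∑ j ∈ Tstarᶜ, Real.sqrt (∑ k, (α j k) ^ 2)
      ≤ 21 * ∑ j ∈ Tstar, Real.sqrt (∑ k, (α j k) ^ 2))
    (T : ℕ → Finset (Fin d))
    -- the T_l, l = 0,...,L, partition {1,...,d}
    (hdisj : ∀ l l', l ≤ L → l' ≤ L → l ≠ l' → Disjoint (T l) (T l'))
    -- every group except possibly the last has exactly s* elements
    (hcard : ∀ l < L, (T l).card = sstar)
    (hcardL : (T L).card ≤ sstar)
    -- T_{l+1} consists of blocks no larger (in norm) than those of T_l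
    (horder : ∀ l < L, ∀ j ∈ T (l + 1), ∀ j' ∈ T l,
      Real.sqrt (∑ k, (α j k) ^ 2) ≤ Real.sqrt (∑ k, (α j' k) ^ 2))
    -- T_0 consists of the s* largest blocks overall
    (hmax : ∀ j ∈ T 0, ∀ j' ∉ T 0,
      Real.sqrt (∑ k, (α j' k) ^ 2) ≤ Real.sqrt (∑ k, (α j k) ^ 2)) :
    ∑ l ∈ Finset.range (L + 1), Real.sqrt (∑ j ∈ T l, ∑ k, (α j k) ^ 2)
      ≤ 23 * Real.sqrt (∑ j ∈ T 0, ∑ k, (α j k) ^ 2) := by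
  have hsq (S : Finset (Fin d)) :
      ∑ j ∈ S, ∑ k, α j k ^ 2 = ∑ j ∈ S, √(∑ k, α j k ^ 2) ^ 2 :=
    sum_congr rfl fun j _ => (Real.sq_sqrt (by positivity)).symm
  have hdisj' : (range L : Set ℕ).PairwiseDisjoint T := fun l hl l' hl' =>
    hdisj l l' (mem_range.1 hl).le (mem_range.1 hl').le
  simp only [hsq]
  calc _ ≤ (21 + 2) * √(∑ j ∈ T 0, √(∑ k, α j k ^ 2) ^ 2) :=
        sum_sqrt_sum_sq_le_of_cone (fun j => Real.sqrt_nonneg _) (by norm_num) hs hTstar hcone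
          hdisj' hcard hcardL horder hmax
    _ = 23 * √(∑ j ∈ T 0, √(∑ k, α j k ^ 2) ^ 2) := by norm_num

/-- cone decomposition bound `∑_{l=0}^L ‖α_{G_{T_l}}‖ ≤ 23 ‖α_{G_{T_0}}‖`. -/
theorem stmt_0
    (d m sstar L : ℕ) (hs : 0 < sstar)
    (α : Fin d → Fin m → ℝ)
    (Tstar : Finset (Fin d)) (hTstar : Tstar.card = sstar)
    -- cone condition
    (hcone : ∑ j ∈ Tstarᶜ, Real.sqrt (∑ k, (α j k) ^ 2)
      ≤ 21 * ∑ j ∈ Tstar, Real.sqrt (∑ k, (α j k) ^ 2))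
    (T : ℕ → Finset (Fin d))
    -- the T_l, l = 0,...,L, partition {1,...,d}
    (hdisj : ∀ l l', l ≤ L → l' ≤ L → l ≠ l' → Disjoint (T l) (T l'))
    (hcover : ∀ j : Fin d, ∃ l ≤ L, j ∈ T l)
    -- every group except possibly the last has exactly s* elements
    (hcard : ∀ l < L, (T l).card = sstar)
    (hcardL : (T L).card ≤ sstar)
    -- T_{l+1} consists of blocks no larger (in norm) than those of T_l
    (horder : ∀ l < L, ∀ j ∈ T (l + 1), ∀ j' ∈ T l,
      Real.sqrt (∑ k, (α j k) ^ 2) ≤ Real.sqrt (∑ k, (α j' k) ^ 2))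
    -- T_0 consists of the s* largest blocks overall
    (hmax : ∀ j ∈ T 0, ∀ j' ∉ T 0,
      Real.sqrt (∑ k, (α j' k) ^ 2) ≤ Real.sqrt (∑ k, (α j k) ^ 2)) :
    ∑ l ∈ Finset.range (L + 1), Real.sqrt (∑ j ∈ T l, ∑ k, (α j k) ^ 2)
      ≤ 23 * Real.sqrt (∑ j ∈ T 0, ∑ k, (α j k) ^ 2) :=
  stmt_0_general d m sstar L hs α Tstar hTstar hcone T hdisj hcard hcardL horder hmax
end

section
/- Let A be a symmetric positive semidefinite dm×dm matrix, and for a subset T ⊆ {1,...,d} let φ(s) = max over subsets T with |T| ≤ s and unit vectors α supported on the blocks indexed by T of ||A^{1/2} α||. Then for any positive integers s and l, φ(l·s)^2 ≤ ⌈l⌉ · φ(s)^2, where ⌈l⌉ is the ceiling. More precisely, for any real l > 0 with ls a positive integer, the group sparse maximum eigenvalue satisfies φ_max(ls)^2 ≤ ⌈l⌉ φ_max(s)^2. -/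
/-!
Split a vector supported on at most `n * s` blocks into `n` pieces with disjoint supports, each
on at most `s` blocks. By Cauchy–Schwarz, `‖B α‖² = ‖∑ᵢ B αᵢ‖² ≤ n ∑ᵢ ‖B αᵢ‖²`, and by homogeneity
each `‖B αᵢ‖² ≤ ‖αᵢ‖² φ_max(s)²`; the `‖αᵢ‖²` sum to `‖α‖² = 1`. Take `n = ⌈l⌉`.
-/

open Finset Matrix

variable {ι κ η τ : Type*}

def SupportedOnBlocks (T : Finset κ) (α : κ × η → ℝ) : Prop :=
  ∀ p : κ × η, p.1 ∉ T → α p = 0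

def sparseImageNorms [Fintype ι] [Fintype κ] [Fintype η] (B : Matrix ι (κ × η) ℝ) (s : ℕ) :
    Set ℝ :=
  {r | ∃ T : Finset κ, T.card ≤ s ∧ ∃ α : κ × η → ℝ, (∑ p, α p ^ 2 = 1) ∧
    SupportedOnBlocks T α ∧ r = √(∑ i, (B *ᵥ α) i ^ 2)}

/-- `φ_max(s)` with `B = A^{1/2}`. For `s = 0` the set is empty and the value is `sSup ∅ = 0`. -/
noncomputable def groupSparseMaxEigenvalue [Fintype ι] [Fintype κ] [Fintype η]
    (B : Matrix ι (κ × η) ℝ) (s : ℕ) : ℝ :=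
  sSup (sparseImageNorms B s)

theorem Finset.exists_fiber_card_le_of_card_le_mul (T : Finset κ) {n s : ℕ} (hn : 0 < n)
    (hT : T.card ≤ n * s) : ∃ g : κ → Fin n, ∀ i, #{x ∈ T | g x = i} ≤ s := by
  classical
  obtain ⟨e⟩ : Nonempty (T ↪ Fin n × Fin s) :=
    Function.Embedding.nonempty_of_card_le (by simpa using hT)
  refine ⟨fun x => if h : x ∈ T then (e ⟨x, h⟩).1 else ⟨0, hn⟩, fun i => ?_⟩
  calc #{x ∈ T | _} ≤ #(range s) := by
        refine card_le_card_of_injOn (fun x => if h : x ∈ T then ((e ⟨x, h⟩).2 : ℕ) else 0)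
          ?_ ?_
        · intro x hx
          simp only [coe_filter] at hx
          simp [hx.1]
        · intro x hx y hy hxy
          simp only [coe_filter, Set.mem_ofPred_eq] at hx hy
          obtain ⟨hxT, rfl⟩ := hx
          obtain ⟨hyT, hgy⟩ := hy
          simp only [hxT, hyT, dite_true] at hxy hgy
          have : e ⟨x, hxT⟩ = e ⟨y, hyT⟩ := Prod.ext hgy.symm (Fin.ext hxy)
          exact congrArg Subtype.val (e.injective this)
    _ = s := card_range s

section BlockPart

variable [DecidableEq τ]

def blockPart (g : κ → τ) (α : κ × η → ℝ) (i : τ) (p : κ × η) : ℝ :=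
  if g p.1 = i then α p else 0

theorem SupportedOnBlocks.blockPart (g : κ → τ) {T : Finset κ} {α : κ × η → ℝ}
    (hα : SupportedOnBlocks T α) (i : τ) :
    SupportedOnBlocks {x ∈ T | g x = i} (blockPart g α i) := by
  intro p hp
  by_cases hpT : p.1 ∈ T
  · simp_all [_root_.blockPart]
  · simp [_root_.blockPart, hα p hpT]

variable [Fintype τ] (g : κ → τ) (α : κ × η → ℝ)

theorem sum_blockPart : ∑ i, blockPart g α i = α := by
  ext p
  simp [blockPart]

theorem sum_sum_blockPart_sq [Fintype κ] [Fintype η] :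
    ∑ i, ∑ p, blockPart g α i p ^ 2 = ∑ p, α p ^ 2 := by
  rw [sum_comm]
  refine sum_congr rfl fun p _ => ?_
  simp [blockPart, apply_ite (· ^ 2 : ℝ → ℝ)]

end BlockPart

theorem sum_sq_smul [Fintype ι] (a : ℝ) (v : ι → ℝ) :
    ∑ i, (a • v) i ^ 2 = a ^ 2 * ∑ i, v i ^ 2 := by
  simp [mul_pow, mul_sum]

section GroupSparseMaxEigenvalue

variable [Fintype ι] [Fintype κ] [Fintype η] (B : Matrix ι (κ × η) ℝ)

theorem sparseImageNorms_bddAbove (s : ℕ) : BddAbove (sparseImageNorms B s) := by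
  refine ⟨√(∑ i, ∑ p, B i p ^ 2), ?_⟩
  rintro r ⟨T, -, α, hα1, -, rfl⟩
  refine Real.sqrt_le_sqrt (sum_le_sum fun i _ => ?_)
  calc (B *ᵥ α) i ^ 2 ≤ (∑ p, B i p ^ 2) * ∑ p, α p ^ 2 := sum_mul_sq_le_sq_mul_sq _ _ _
    _ = ∑ p, B i p ^ 2 := by rw [hα1, mul_one]

theorem groupSparseMaxEigenvalue_nonneg (s : ℕ) : 0 ≤ groupSparseMaxEigenvalue B s :=
  Real.sSup_nonneg fun _ ⟨_, _, _, _, _, hr⟩ => hr ▸ Real.sqrt_nonneg _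

theorem sum_sq_mulVec_le_of_supportedOnBlocks {s : ℕ} {T : Finset κ} (hT : T.card ≤ s)
    {α : κ × η → ℝ} (hα : SupportedOnBlocks T α) :
    ∑ i, (B *ᵥ α) i ^ 2 ≤ (∑ p, α p ^ 2) * groupSparseMaxEigenvalue B s ^ 2 := by
  rcases (sum_nonneg fun p _ => sq_nonneg (α p)).eq_or_lt with hc | hc
  · have hα0 : α = 0 := funext fun p =>
      pow_eq_zero_iff two_ne_zero |>.1 <|
        (sum_eq_zero_iff_of_nonneg fun p _ => sq_nonneg (α p)).1 hc.symm p (mem_univ p)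
    subst hα0
    simp
  set γ := (√(∑ p, α p ^ 2))⁻¹ • α
  have hγ1 : ∑ p, γ p ^ 2 = 1 := by
    rw [sum_sq_smul, inv_pow, Real.sq_sqrt hc.le, inv_mul_cancel₀ hc.ne']
  have hγT : SupportedOnBlocks T γ := fun p hp => by simp [γ, hα p hp]
  have hγ : √(∑ i, (B *ᵥ γ) i ^ 2) ≤ groupSparseMaxEigenvalue B s :=
    le_csSup (sparseImageNorms_bddAbove B s) ⟨T, hT, γ, hγ1, hγT, rfl⟩
  rw [Real.sqrt_le_left (groupSparseMaxEigenvalue_nonneg B s), mulVec_smul, sum_sq_smul,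
    inv_pow, Real.sq_sqrt hc.le, inv_mul_le_iff₀ hc] at hγ
  exact hγ

theorem sum_sq_mulVec_le_card_mul [Fintype τ] [DecidableEq τ] (g : κ → τ) {s : ℕ}
    {T : Finset κ} (hg : ∀ i, #{x ∈ T | g x = i} ≤ s) {α : κ × η → ℝ}
    (hα : SupportedOnBlocks T α) :
    ∑ j, (B *ᵥ α) j ^ 2 ≤
      Fintype.card τ * (∑ p, α p ^ 2) * groupSparseMaxEigenvalue B s ^ 2 := by
  calc ∑ j, (B *ᵥ α) j ^ 2 = ∑ j, (∑ i, (B *ᵥ blockPart g α i) j) ^ 2 := by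
        conv_lhs => rw [← sum_blockPart g α]
        simp only [mulVec_sum, Finset.sum_apply]
    _ ≤ ∑ j, Fintype.card τ * ∑ i, (B *ᵥ blockPart g α i) j ^ 2 :=
        sum_le_sum fun j _ => card_univ (α := τ) ▸ sq_sum_le_card_mul_sum_sq
    _ = Fintype.card τ * ∑ i, ∑ j, (B *ᵥ blockPart g α i) j ^ 2 := by
        rw [← mul_sum, sum_comm]
    _ ≤ Fintype.card τ *
          ∑ i, (∑ p, blockPart g α i p ^ 2) * groupSparseMaxEigenvalue B s ^ 2 := by
        gcongr with i
        exact sum_sq_mulVec_le_of_supportedOnBlocks B (hg i) (hα.blockPart g i)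
    _ = Fintype.card τ * (∑ p, α p ^ 2) * groupSparseMaxEigenvalue B s ^ 2 := by
        rw [← sum_mul, sum_sum_blockPart_sq, mul_assoc]

theorem groupSparseMaxEigenvalue_sq_le_mul {n s k : ℕ} (hn : 0 < n) (hk : k ≤ n * s) :
    groupSparseMaxEigenvalue B k ^ 2 ≤ n * groupSparseMaxEigenvalue B s ^ 2 := by
  rw [← Real.le_sqrt (groupSparseMaxEigenvalue_nonneg B k) (by positivity)]
  refine Real.sSup_le ?_ (Real.sqrt_nonneg _)
  rintro r ⟨T, hT, α, hα1, hαT, rfl⟩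
  obtain ⟨g, hg⟩ := T.exists_fiber_card_le_of_card_le_mul hn (hT.trans hk)
  refine Real.sqrt_le_sqrt ?_
  simpa [hα1] using sum_sq_mulVec_le_card_mul B g hg hαT

end GroupSparseMaxEigenvalue

theorem stmt_1_general
    (d m : ℕ)
    (B : Matrix (Fin d × Fin m) (Fin d × Fin m) ℝ)
    (φ : ℕ → ℝ)
    (hφ : ∀ s : ℕ, φ s = sSup {r : ℝ |
      ∃ T : Finset (Fin d), T.card ≤ s ∧
      ∃ α : (Fin d × Fin m) → ℝ, (∑ p, (α p) ^ 2 = 1) ∧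
        (∀ p : Fin d × Fin m, p.1 ∉ T → α p = 0) ∧
        r = Real.sqrt (∑ p, (B.mulVec α p) ^ 2)})
    (s k : ℕ)
    (l : ℝ) (hl : 0 < l) (hls : l * (s : ℝ) = (k : ℝ)) :
    (φ k) ^ 2 ≤ (⌈l⌉ : ℝ) * (φ s) ^ 2 := by
  have hφB : φ = groupSparseMaxEigenvalue B := funext hφ
  have hk : k ≤ ⌈l⌉₊ * s := by
    have : (k : ℝ) ≤ ⌈l⌉₊ * s := hls ▸ mul_le_mul_of_nonneg_right (Nat.le_ceil l) s.cast_nonneg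
    exact_mod_cast this
  rw [hφB, ← Int.natCast_ceil_eq_ceil hl.le, Int.cast_natCast]
  exact groupSparseMaxEigenvalue_sq_le_mul B (Nat.ceil_pos.2 hl) hk

/-- sublinearity of the group sparse maximum eigenvalue:
`φ_max(ls)² ≤ ⌈l⌉ φ_max(s)²` whenever `l > 0` and `ls` is a positive integer.
Here `B` plays the role of the square root `A^{1/2}` of a symmetric PSD matrix `A`,
and `φ_max(s)` is the supremum of `‖B α‖` over unit vectors `α` supported on at
most `s` of the `d` blocks of size `m`. -/
theorem stmt_1
    (d m : ℕ)
    (A B : Matrix (Fin d × Fin m) (Fin d × Fin m) ℝ)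
    (hA : A.IsSymm) (hApsd : A.PosSemidef) (hB : B * B = A) (hBsymm : B.IsSymm)
    (φ : ℕ → ℝ)
    (hφ : ∀ s : ℕ, φ s = sSup {r : ℝ |
      ∃ T : Finset (Fin d), T.card ≤ s ∧
      ∃ α : (Fin d × Fin m) → ℝ, (∑ p, (α p) ^ 2 = 1) ∧
        (∀ p : Fin d × Fin m, p.1 ∉ T → α p = 0) ∧
        r = Real.sqrt (∑ p, (B.mulVec α p) ^ 2)})
    (s k : ℕ) (hs : 0 < s) (hk : 0 < k)
    (l : ℝ) (hl : 0 < l) (hls : l * (s : ℝ) = (k : ℝ)) :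
    (φ k) ^ 2 ≤ (⌈l⌉ : ℝ) * (φ s) ^ 2 :=
  stmt_1_general d m B φ hφ s k l hl hls
end

section
/- Let Σ̂ and Σ be symmetric positive semidefinite dm×dm matrices (with R^{dm} partitioned into d blocks of size m), let C be the cone {α ∈ R^{dm} : Σ_{j∉T*} ||α_{G_j}|| ≤ 21 Σ_{j∈T*} ||α_{G_j}||} for a fixed set T* with |T*| = s*, and define κ̂ = min_{α ∈ S^{dm-1} ∩ C} ||Σ̂^{1/2} α|| and κ = min_{α ∈ S^{dm-1} ∩ C} ||Σ^{1/2} α||. Then |κ̂² − κ²| ≤ 23² · max_{|T| ≤ 2s*} ||Σ̂_T − Σ_T||, where Σ̂_T and Σ_T denote the principal submatrices corresponding to the blocks in T and ||·|| the operator norm. -/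
/-!
Write `Δ = Σ̂ - Σ`. Shelling off the `s*` largest blocks of a unit vector `α` over and over splits
it into `s*`-block-sparse pieces `h₀, h₁, …` with `∑ ‖hₗ‖ ≤ ‖α‖ + (∑ⱼ ‖α_{Gⱼ}‖) / √s*`, because
after a shell is removed every remaining block is at most that shell's average. On the cone,
`∑ⱼ ‖α_{Gⱼ}‖ ≤ 22 ∑_{j ∈ T*} ‖α_{Gⱼ}‖ ≤ 22 √s*` by Cauchy–Schwarz, so `∑ ‖hₗ‖ ≤ 23`. Each cross
term `hₗ' Δ hₗ'` lives on at most `2 s*` blocks, whence `|α' Δ α| ≤ 23² max_{|T| ≤ 2s*} ‖Δ_T‖`,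
and the two infima differ by at most that much.
-/

open Finset Matrix

lemma Finset.exists_subset_card_eq_forall_sdiff_le {α β : Type*} [DecidableEq α]
    [LinearOrder β] (S : Finset α) (f : α → β) {k : ℕ} (hk : k ≤ S.card) :
    ∃ T ⊆ S, T.card = k ∧ ∀ j ∈ T, ∀ i ∈ S \ T, f i ≤ f j := by
  induction k with
  | zero => exact ⟨∅, empty_subset S, rfl, by simp⟩
  | succ k ih =>
    obtain ⟨T, hTS, hTk, hTtop⟩ := ih (Nat.le_of_succ_le hk)
    have hne : (S \ T).Nonempty := by
      rw [← card_pos, card_sdiff_of_subset hTS, hTk]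
      omega
    obtain ⟨j₀, hj₀, hj₀max⟩ := exists_max_image (S \ T) f hne
    have hj₀T : j₀ ∉ T := (mem_sdiff.1 hj₀).2
    refine ⟨insert j₀ T, insert_subset (mem_sdiff.1 hj₀).1 hTS,
      by rw [card_insert_of_notMem hj₀T, hTk], ?_⟩
    intro j hj i hi
    have hi' : i ∈ S \ T := by
      rw [mem_sdiff, mem_insert, not_or] at hi
      exact mem_sdiff.2 ⟨hi.1, hi.2.2⟩
    rcases mem_insert.1 hj with rfl | hj
    · exact hj₀max i hi'
    · exact hTtop j hj i hi'

namespace BlockSparse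

section Support

variable {ι κ : Type*}

def BlockSupported (T : Finset ι) (x : ι × κ → ℝ) : Prop :=
  ∀ p : ι × κ, p.1 ∉ T → x p = 0

def IsBlockSparse (s : ℕ) (x : ι × κ → ℝ) : Prop :=
  ∃ T : Finset ι, T.card ≤ s ∧ BlockSupported T x

def restrictBlocks [DecidableEq ι] (T : Finset ι) (x : ι × κ → ℝ) : ι × κ → ℝ :=
  fun p => if p.1 ∈ T then x p else 0

lemma BlockSupported.mono {S T : Finset ι} {x : ι × κ → ℝ} (hx : BlockSupported S x)
    (hST : S ⊆ T) : BlockSupported T x :=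
  fun p hp => hx p fun h => hp (hST h)

lemma BlockSupported.smul {T : Finset ι} {x : ι × κ → ℝ} (hx : BlockSupported T x) (c : ℝ) :
    BlockSupported T (c • x) :=
  fun p hp => by simp [hx p hp]

variable [DecidableEq ι]

lemma blockSupported_restrictBlocks (T : Finset ι) (x : ι × κ → ℝ) :
    BlockSupported T (restrictBlocks T x) :=
  fun _ hp => if_neg hp

lemma restrictBlocks_eq_self {T : Finset ι} {x : ι × κ → ℝ} (hx : BlockSupported T x) :
    restrictBlocks T x = x :=
  funext fun p => by by_cases hp : p.1 ∈ T <;> simp [restrictBlocks, hp, hx p]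

lemma restrictBlocks_add_restrictBlocks_sdiff {S T : Finset ι} {x : ι × κ → ℝ}
    (hx : BlockSupported S x) :
    restrictBlocks T x + restrictBlocks (S \ T) x = x := by
  funext p
  by_cases hT : p.1 ∈ T
  · simp [restrictBlocks, hT]
  · by_cases hS : p.1 ∈ S <;> simp [restrictBlocks, hT, hS, hx p]

end Support

section Norms

variable {ι κ : Type*} [Fintype κ]

noncomputable def blockNorm (x : ι × κ → ℝ) (j : ι) : ℝ := √(∑ k, x (j, k) ^ 2)

lemma blockNorm_nonneg (x : ι × κ → ℝ) (j : ι) : 0 ≤ blockNorm x j := Real.sqrt_nonneg _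

lemma blockNorm_restrictBlocks [DecidableEq ι] (T : Finset ι) (x : ι × κ → ℝ) (j : ι) :
    blockNorm (restrictBlocks T x) j = if j ∈ T then blockNorm x j else 0 := by
  by_cases hj : j ∈ T <;> simp [blockNorm, restrictBlocks, hj]

lemma blockNorm_restrictBlocks_sdiff_le_average [DecidableEq ι] {s : ℕ} (hs : 0 < s)
    {S T : Finset ι} (hTs : T.card = s) {y : ι × κ → ℝ}
    (hTtop : ∀ j ∈ T, ∀ i ∈ S \ T, blockNorm y i ≤ blockNorm y j) (j : ι) :
    blockNorm (restrictBlocks (S \ T) y) j ≤ (∑ i ∈ T, blockNorm y i) / s := by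
  have hsR : (0 : ℝ) < s := Nat.cast_pos.2 hs
  rw [blockNorm_restrictBlocks]
  split_ifs with hj
  · rw [le_div_iff₀ hsR, mul_comm, ← hTs, ← nsmul_eq_mul, ← sum_const]
    exact sum_le_sum fun i hi => hTtop i hi j hj
  · exact div_nonneg (sum_nonneg fun i _ => blockNorm_nonneg y i) hsR.le

variable [Fintype ι]

noncomputable def l2Norm (x : ι × κ → ℝ) : ℝ := √(∑ p, x p ^ 2)

lemma l2Norm_nonneg (x : ι × κ → ℝ) : 0 ≤ l2Norm x := Real.sqrt_nonneg _

lemma sq_l2Norm (x : ι × κ → ℝ) : l2Norm x ^ 2 = ∑ p, x p ^ 2 :=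
  Real.sq_sqrt (by positivity)

lemma sq_l2Norm_eq_sum_sq_blockNorm (x : ι × κ → ℝ) :
    l2Norm x ^ 2 = ∑ j, blockNorm x j ^ 2 := by
  simp only [sq_l2Norm, blockNorm, Real.sq_sqrt (sum_nonneg fun _ _ => sq_nonneg _),
    Fintype.sum_prod_type]

lemma l2Norm_eq_one {x : ι × κ → ℝ} (hx : ∑ p, x p ^ 2 = 1) : l2Norm x = 1 := by
  rw [l2Norm, hx, Real.sqrt_one]

lemma sum_sq_inv_smul_self {x : ι × κ → ℝ} (hx : l2Norm x ≠ 0) :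
    ∑ p, ((l2Norm x)⁻¹ • x) p ^ 2 = 1 := by
  simp only [Pi.smul_apply, smul_eq_mul, mul_pow, ← mul_sum, ← sq_l2Norm]
  field_simp

lemma eq_zero_of_l2Norm_eq_zero {x : ι × κ → ℝ} (hx : l2Norm x = 0) : x = 0 := by
  rw [l2Norm, Real.sqrt_eq_zero (by positivity)] at hx
  funext p
  exact pow_eq_zero_iff two_ne_zero |>.1 <|
    (sum_eq_zero_iff_of_nonneg fun _ _ => sq_nonneg _).1 hx p (mem_univ p)

lemma sum_blockNorm_le (T : Finset ι) (x : ι × κ → ℝ) :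
    ∑ j ∈ T, blockNorm x j ≤ √T.card * l2Norm x := by
  refine (pow_le_pow_iff_left₀ (sum_nonneg fun j _ => blockNorm_nonneg x j)
    (mul_nonneg (Real.sqrt_nonneg _) (l2Norm_nonneg x)) two_ne_zero).1 ?_
  calc (∑ j ∈ T, blockNorm x j) ^ 2 ≤ T.card * ∑ j ∈ T, blockNorm x j ^ 2 :=
        sq_sum_le_card_mul_sum_sq
    _ ≤ T.card * l2Norm x ^ 2 := by
        rw [sq_l2Norm_eq_sum_sq_blockNorm]
        gcongr
        exact subset_univ T
    _ = (√T.card * l2Norm x) ^ 2 := by rw [mul_pow, Real.sq_sqrt (Nat.cast_nonneg _)]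

variable [DecidableEq ι]

lemma l2Norm_restrictBlocks_le (T : Finset ι) (x : ι × κ → ℝ) :
    l2Norm (restrictBlocks T x) ≤ l2Norm x :=
  Real.sqrt_le_sqrt <| sum_le_sum fun p _ => by
    unfold restrictBlocks; split_ifs <;> simp [sq_nonneg]

lemma l2Norm_restrictBlocks_le_of_blockNorm_le {T : Finset ι} {s : ℕ} (hT : T.card ≤ s)
    {x : ι × κ → ℝ} {b : ℝ} (hb : 0 ≤ b) (hx : ∀ j, blockNorm x j ≤ b) :
    l2Norm (restrictBlocks T x) ≤ √s * b := by
  refine (pow_le_pow_iff_left₀ (l2Norm_nonneg _) (by positivity) two_ne_zero).1 ?_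
  calc l2Norm (restrictBlocks T x) ^ 2 = ∑ j ∈ T, blockNorm x j ^ 2 := by
        simp [sq_l2Norm_eq_sum_sq_blockNorm, blockNorm_restrictBlocks, ite_pow]
    _ ≤ ∑ _j ∈ T, b ^ 2 := sum_le_sum fun j _ => pow_le_pow_left₀ (blockNorm_nonneg x j) (hx j) 2
    _ ≤ s * b ^ 2 := by rw [sum_const, nsmul_eq_mul]; gcongr
    _ = (√s * b) ^ 2 := by rw [mul_pow, Real.sq_sqrt (Nat.cast_nonneg _)]

end Norms

section Decomposition

variable {ι κ : Type*} [Fintype ι] [Fintype κ]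

def HasBlockSparseDecomp (s : ℕ) (c : ℝ) (x : ι × κ → ℝ) : Prop :=
  ∃ (n : ℕ) (h : Fin n → ι × κ → ℝ),
    (∀ i, IsBlockSparse s (h i)) ∧ ∑ i, h i = x ∧ ∑ i, l2Norm (h i) ≤ c

namespace HasBlockSparseDecomp

variable {s : ℕ} {c c' : ℝ} {x y : ι × κ → ℝ}

lemma zero : HasBlockSparseDecomp s 0 (0 : ι × κ → ℝ) :=
  ⟨0, Fin.elim0, fun i => i.elim0, by simp, by simp⟩

lemma of_isBlockSparse (hx : IsBlockSparse s x) : HasBlockSparseDecomp s (l2Norm x) x :=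
  ⟨1, fun _ => x, fun _ => hx, by simp, by simp⟩

lemma mono (hx : HasBlockSparseDecomp s c x) (hc : c ≤ c') : HasBlockSparseDecomp s c' x :=
  let ⟨n, h, hs, hsum, hnorm⟩ := hx
  ⟨n, h, hs, hsum, hnorm.trans hc⟩

lemma add (hx : HasBlockSparseDecomp s c x) (hy : HasBlockSparseDecomp s c' y) :
    HasBlockSparseDecomp s (c + c') (x + y) := by
  obtain ⟨n, g, hg, rfl, hgc⟩ := hx
  obtain ⟨n', h, hh, rfl, hhc⟩ := hy
  refine ⟨n + n', Fin.append g h, Fin.addCases (by simpa using hg) (by simpa using hh), ?_, ?_⟩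
  · simp [Fin.sum_univ_add]
  · simpa [Fin.sum_univ_add] using add_le_add hgc hhc

end HasBlockSparseDecomp

variable [DecidableEq ι]

/-- Shelling: peel off the `s` largest blocks, after which every remaining block is at most their
average, and recurse. -/
lemma hasBlockSparseDecomp_of_blockSupported {s : ℕ} (hs : 0 < s) {S : Finset ι}
    {y : ι × κ → ℝ} (hy : BlockSupported S y) {a : ℝ}
    (ha : ∀ T : Finset ι, T.card ≤ s → l2Norm (restrictBlocks T y) ≤ a) :
    HasBlockSparseDecomp s (a + (∑ j ∈ S, blockNorm y j) / √s) y := by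
  induction S using Finset.strongInduction generalizing y a with
  | H S ih =>
  by_cases hS : S.card ≤ s
  · refine (HasBlockSparseDecomp.of_isBlockSparse ⟨S, hS, hy⟩).mono ?_
    have := restrictBlocks_eq_self hy ▸ ha S hS
    have : 0 ≤ (∑ j ∈ S, blockNorm y j) / √s :=
      div_nonneg (sum_nonneg fun j _ => blockNorm_nonneg y j) (Real.sqrt_nonneg _)
    linarith
  obtain ⟨T, hTS, hTs, hTtop⟩ :=
    S.exists_subset_card_eq_forall_sdiff_le (blockNorm y) (not_le.1 hS).le
  set b := (∑ j ∈ T, blockNorm y j) / s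
  have hsR : (0 : ℝ) < s := Nat.cast_pos.2 hs
  have hb : 0 ≤ b := div_nonneg (sum_nonneg fun j _ => blockNorm_nonneg y j) hsR.le
  have hrest := ih (S \ T) (sdiff_ssubset hTS (card_pos.1 (hTs ▸ hs)))
    (blockSupported_restrictBlocks _ y) fun T' hT' => l2Norm_restrictBlocks_le_of_blockNorm_le
      hT' hb (blockNorm_restrictBlocks_sdiff_le_average hs hTs hTtop)
  have htop :=
    HasBlockSparseDecomp.of_isBlockSparse ⟨T, hTs.le, blockSupported_restrictBlocks T y⟩
  have hdecomp := (htop.add hrest).mono (c' := a + (∑ j ∈ S, blockNorm y j) / √s) ?_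
  · rwa [restrictBlocks_add_restrictBlocks_sdiff hy] at hdecomp
  have hsum : ∑ j ∈ S \ T, blockNorm (restrictBlocks (S \ T) y) j = ∑ j ∈ S \ T, blockNorm y j :=
    sum_congr rfl fun j hj => by rw [blockNorm_restrictBlocks, if_pos hj]
  have hsqrt : √(s : ℝ) * b = (∑ j ∈ T, blockNorm y j) / √s := by
    field_simp
    rw [Real.sq_sqrt hsR.le]
    exact mul_div_cancel₀ _ hsR.ne'
  rw [hsum, hsqrt, ← sum_sdiff hTS]
  have := ha T hTs.le
  linarith [add_div (∑ j ∈ S \ T, blockNorm y j) (∑ j ∈ T, blockNorm y j) √s]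

end Decomposition

section BlockOpNorm

variable {ι κ : Type*} [Fintype ι] [Fintype κ]

def blockFormValues (A : Matrix (ι × κ) (ι × κ) ℝ) (T : Finset ι) : Set ℝ :=
  {r : ℝ | ∃ α β : ι × κ → ℝ, BlockSupported T α ∧ BlockSupported T β ∧
    ∑ p, α p ^ 2 = 1 ∧ ∑ p, β p ^ 2 = 1 ∧ r = |α ⬝ᵥ A *ᵥ β|}

/-- The operator norm of the principal submatrix of `A` on the blocks in `T`. -/
noncomputable def blockOpNorm (A : Matrix (ι × κ) (ι × κ) ℝ) (T : Finset ι) : ℝ :=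
  sSup (blockFormValues A T)

lemma abs_le_one_of_sum_sq_eq_one {n : Type*} [Fintype n] {a : n → ℝ}
    (ha : ∑ i, a i ^ 2 = 1) (i : n) : |a i| ≤ 1 :=
  sq_le_one_iff_abs_le_one _ |>.1 <| ha ▸
    single_le_sum (f := fun i => a i ^ 2) (fun _ _ => sq_nonneg _) (mem_univ i)

lemma abs_dotProduct_mulVec_le_sum_abs {n : Type*} [Fintype n] (A : Matrix n n ℝ)
    {a b : n → ℝ} (ha : ∀ i, |a i| ≤ 1) (hb : ∀ i, |b i| ≤ 1) :
    |a ⬝ᵥ A *ᵥ b| ≤ ∑ i, ∑ j, |A i j| := by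
  simp only [dotProduct, mulVec, mul_sum]
  refine (abs_sum_le_sum_abs _ _).trans <| sum_le_sum fun i _ =>
    (abs_sum_le_sum_abs _ _).trans <| sum_le_sum fun j _ => ?_
  rw [abs_mul, abs_mul]
  calc |a i| * (|A i j| * |b j|) ≤ 1 * (|A i j| * 1) := by
        gcongr
        exacts [ha i, hb j]
    _ = |A i j| := by ring

lemma le_sum_abs_of_mem_blockFormValues {A : Matrix (ι × κ) (ι × κ) ℝ} {T : Finset ι}
    {r : ℝ} (hr : r ∈ blockFormValues A T) : r ≤ ∑ p, ∑ q, |A p q| := by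
  obtain ⟨α, β, -, -, hα, hβ, rfl⟩ := hr
  exact abs_dotProduct_mulVec_le_sum_abs A (abs_le_one_of_sum_sq_eq_one hα)
    (abs_le_one_of_sum_sq_eq_one hβ)

lemma blockOpNorm_nonneg (A : Matrix (ι × κ) (ι × κ) ℝ) (T : Finset ι) :
    0 ≤ blockOpNorm A T :=
  Real.sSup_nonneg <| by
    rintro r ⟨α, β, -, -, -, -, rfl⟩
    exact abs_nonneg _

lemma blockOpNorm_le_sum_abs (A : Matrix (ι × κ) (ι × κ) ℝ) (T : Finset ι) :
    blockOpNorm A T ≤ ∑ p, ∑ q, |A p q| :=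
  Real.sSup_le (fun _ => le_sum_abs_of_mem_blockFormValues) (by positivity)

lemma abs_dotProduct_mulVec_le_blockOpNorm (A : Matrix (ι × κ) (ι × κ) ℝ) {T : Finset ι}
    {x y : ι × κ → ℝ} (hx : BlockSupported T x) (hy : BlockSupported T y) :
    |x ⬝ᵥ A *ᵥ y| ≤ l2Norm x * l2Norm y * blockOpNorm A T := by
  by_cases hx0 : l2Norm x = 0
  · rw [hx0, eq_zero_of_l2Norm_eq_zero hx0]
    simp
  by_cases hy0 : l2Norm y = 0
  · rw [hy0, eq_zero_of_l2Norm_eq_zero hy0]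
    simp
  have hunit : |((l2Norm x)⁻¹ • x) ⬝ᵥ A *ᵥ ((l2Norm y)⁻¹ • y)| ≤ blockOpNorm A T :=
    le_csSup ⟨_, fun _ => le_sum_abs_of_mem_blockFormValues⟩ ⟨_, _, hx.smul _, hy.smul _,
      sum_sq_inv_smul_self hx0, sum_sq_inv_smul_self hy0, rfl⟩
  rw [mulVec_smul, dotProduct_smul, smul_dotProduct, smul_eq_mul, smul_eq_mul, abs_mul,
    abs_mul, abs_inv, abs_inv, abs_of_nonneg (l2Norm_nonneg x),
    abs_of_nonneg (l2Norm_nonneg y)] at hunit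
  calc |x ⬝ᵥ A *ᵥ y|
      = l2Norm x * l2Norm y * ((l2Norm y)⁻¹ * ((l2Norm x)⁻¹ * |x ⬝ᵥ A *ᵥ y|)) := by
        field_simp
    _ ≤ l2Norm x * l2Norm y * blockOpNorm A T := by
        have := l2Norm_nonneg x
        have := l2Norm_nonneg y
        gcongr

lemma abs_dotProduct_mulVec_le_of_isBlockSparse (A : Matrix (ι × κ) (ι × κ) ℝ) {s : ℕ}
    {M : ℝ} (hM : ∀ T : Finset ι, T.card ≤ 2 * s → blockOpNorm A T ≤ M)
    {x y : ι × κ → ℝ} (hx : IsBlockSparse s x) (hy : IsBlockSparse s y) :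
    |x ⬝ᵥ A *ᵥ y| ≤ l2Norm x * l2Norm y * M := by
  classical
  obtain ⟨Tx, hTx, hx⟩ := hx
  obtain ⟨Ty, hTy, hy⟩ := hy
  have hcard : (Tx ∪ Ty).card ≤ 2 * s := (card_union_le Tx Ty).trans (by omega)
  calc |x ⬝ᵥ A *ᵥ y| ≤ l2Norm x * l2Norm y * blockOpNorm A (Tx ∪ Ty) :=
        abs_dotProduct_mulVec_le_blockOpNorm A (hx.mono subset_union_left)
          (hy.mono subset_union_right)
    _ ≤ l2Norm x * l2Norm y * M := by
        have := l2Norm_nonneg x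
        have := l2Norm_nonneg y
        gcongr
        exact hM _ hcard

lemma HasBlockSparseDecomp.abs_dotProduct_mulVec_le (A : Matrix (ι × κ) (ι × κ) ℝ) {s : ℕ}
    {M : ℝ} (hM : ∀ T : Finset ι, T.card ≤ 2 * s → blockOpNorm A T ≤ M) {c c' : ℝ}
    {x y : ι × κ → ℝ} (hx : HasBlockSparseDecomp s c x) (hy : HasBlockSparseDecomp s c' y) :
    |x ⬝ᵥ A *ᵥ y| ≤ c * c' * M := by
  obtain ⟨n, g, hg, rfl, hgc⟩ := hx
  obtain ⟨n', h, hh, rfl, hhc⟩ := hy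
  have hM0 : 0 ≤ M := (blockOpNorm_nonneg A ∅).trans (hM ∅ (by simp))
  calc |(∑ i, g i) ⬝ᵥ A *ᵥ ∑ j, h j| = |∑ i, ∑ j, g i ⬝ᵥ A *ᵥ h j| := by
        simp only [mulVec_sum, dotProduct_sum, sum_dotProduct]
        exact congrArg _ sum_comm
    _ ≤ ∑ i, ∑ j, |g i ⬝ᵥ A *ᵥ h j| :=
        (abs_sum_le_sum_abs _ _).trans <| sum_le_sum fun i _ => abs_sum_le_sum_abs _ _
    _ ≤ ∑ i, ∑ j, l2Norm (g i) * l2Norm (h j) * M :=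
        sum_le_sum fun i _ => sum_le_sum fun j _ =>
          abs_dotProduct_mulVec_le_of_isBlockSparse A hM (hg i) (hh j)
    _ = (∑ i, l2Norm (g i)) * (∑ j, l2Norm (h j)) * M := by
        rw [sum_mul_sum, sum_mul]
        simp only [sum_mul]
    _ ≤ c * c' * M :=
        mul_le_mul_of_nonneg_right (mul_le_mul hgc hhc (sum_nonneg fun j _ => l2Norm_nonneg _)
          ((sum_nonneg fun i _ => l2Norm_nonneg _).trans hgc)) hM0

end BlockOpNorm

lemma hasBlockSparseDecomp_of_cone {ι κ : Type*} [Fintype ι] [Fintype κ] [DecidableEq ι]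
    {s : ℕ} {T : Finset ι} (hT : T.card = s) {c₀ : ℝ} (hc₀ : 0 ≤ c₀) {α : ι × κ → ℝ}
    (hcone : ∑ j ∈ Tᶜ, blockNorm α j ≤ c₀ * ∑ j ∈ T, blockNorm α j) :
    HasBlockSparseDecomp s ((c₀ + 2) * l2Norm α) α := by
  rcases Nat.eq_zero_or_pos s with rfl | hs
  · rw [card_eq_zero.1 hT, compl_empty, sum_empty, mul_zero] at hcone
    have hblock : ∀ j, blockNorm α j = 0 := fun j =>
      le_antisymm ((single_le_sum (fun i _ => blockNorm_nonneg α i) (mem_univ j)).trans hcone)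
        (blockNorm_nonneg α j)
    have hα : l2Norm α = 0 :=
      pow_eq_zero_iff two_ne_zero |>.1 <| by simp [sq_l2Norm_eq_sum_sq_blockNorm, hblock]
    rw [hα, mul_zero, eq_zero_of_l2Norm_eq_zero hα]
    exact .zero
  have hsqrt : 0 < √(s : ℝ) := Real.sqrt_pos.2 (Nat.cast_pos.2 hs)
  have hsum : ∑ j, blockNorm α j ≤ (1 + c₀) * (√s * l2Norm α) :=
    calc ∑ j, blockNorm α j = ∑ j ∈ T, blockNorm α j + ∑ j ∈ Tᶜ, blockNorm α j :=
          (sum_add_sum_compl T _).symm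
      _ ≤ (1 + c₀) * ∑ j ∈ T, blockNorm α j := by linarith
      _ ≤ (1 + c₀) * (√s * l2Norm α) := by
          gcongr
          exact hT ▸ sum_blockNorm_le T α
  refine (hasBlockSparseDecomp_of_blockSupported hs (S := univ)
    (fun _ hp => absurd (mem_univ _) hp) (fun T' _ => l2Norm_restrictBlocks_le T' α)).mono ?_
  calc l2Norm α + (∑ j, blockNorm α j) / √s
      ≤ l2Norm α + (1 + c₀) * (√s * l2Norm α) / √s := by gcongr
    _ = (c₀ + 2) * l2Norm α := by
        field_simp
        ring

end BlockSparse

lemma sInf_image_le_sInf_image_add {α : Type*} {A : Set α} (hA : A.Nonempty) {f g : α → ℝ}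
    (hf : BddBelow (f '' A)) {ε : ℝ} (h : ∀ a ∈ A, f a ≤ g a + ε) :
    sInf (f '' A) ≤ sInf (g '' A) + ε := by
  rw [← sub_le_iff_le_add]
  refine le_csInf (hA.image g) ?_
  rintro _ ⟨a, ha, rfl⟩
  linarith [csInf_le hf ⟨a, ha, rfl⟩, h a ha]

lemma abs_sInf_image_sub_sInf_image_le {α : Type*} {A : Set α} {f g : α → ℝ}
    (hf : BddBelow (f '' A)) (hg : BddBelow (g '' A)) {ε : ℝ} (hε : 0 ≤ ε)
    (h : ∀ a ∈ A, |f a - g a| ≤ ε) :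
    |sInf (f '' A) - sInf (g '' A)| ≤ ε := by
  rcases A.eq_empty_or_nonempty with rfl | hA
  · simpa using hε
  rw [abs_sub_le_iff, sub_le_iff_le_add', sub_le_iff_le_add']
  exact ⟨sInf_image_le_sInf_image_add hA hf fun a ha => by linarith [(abs_le.1 (h a ha)).2],
    sInf_image_le_sInf_image_add hA hg fun a ha => by linarith [(abs_le.1 (h a ha)).1]⟩

lemma Matrix.PosSemidef.bddBelow_image_dotProduct_mulVec {n : Type*} [Fintype n]
    {S : Matrix n n ℝ} (hS : S.PosSemidef) (A : Set (n → ℝ)) :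
    BddBelow ((fun x => x ⬝ᵥ S *ᵥ x) '' A) :=
  ⟨0, by
    rintro _ ⟨x, -, rfl⟩
    simpa using hS.dotProduct_mulVec_nonneg x⟩

open BlockSparse in
/-- stability of the restricted eigenvalue:
`|κ̂² − κ²| ≤ 23² · max_{|T| ≤ 2s*} ‖Σ̂_T − Σ_T‖`.
Here `κ̂²` and `κ²` are the infima of the quadratic forms `α ↦ α' Σ̂ α`, `α ↦ α' Σ α`
over unit vectors `α ∈ ℝ^{dm}` in the cone `C`, and for `T ⊆ {1,…,d}` the operator
norm of the principal submatrix `Σ̂_T − Σ_T` is formalized as the supremum of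
`|α'(Σ̂ − Σ)β|` over unit vectors `α, β` supported on the blocks in `T`. -/
theorem stmt_2
    (d m sstar : ℕ)
    (Shat Spop : Matrix (Fin d × Fin m) (Fin d × Fin m) ℝ)
    (hShat : Shat.PosSemidef) (hSpop : Spop.PosSemidef)
    (Tstar : Finset (Fin d)) (hTstar : Tstar.card = sstar)
    -- the cone C
    (C : Set ((Fin d × Fin m) → ℝ))
    (hC : C = {α | ∑ j ∈ Tstarᶜ, Real.sqrt (∑ k, (α (j, k)) ^ 2)
      ≤ 21 * ∑ j ∈ Tstar, Real.sqrt (∑ k, (α (j, k)) ^ 2)})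
    (κhatSq κSq : ℝ)
    (hκhat : κhatSq = sInf {r : ℝ | ∃ α ∈ C, (∑ p, (α p) ^ 2 = 1) ∧
      r = α ⬝ᵥ Shat.mulVec α})
    (hκ : κSq = sInf {r : ℝ | ∃ α ∈ C, (∑ p, (α p) ^ 2 = 1) ∧
      r = α ⬝ᵥ Spop.mulVec α})
    (N : Finset (Fin d) → ℝ)
    (hN : ∀ T : Finset (Fin d), N T = sSup {r : ℝ |
      ∃ α β : (Fin d × Fin m) → ℝ,
        (∀ p : Fin d × Fin m, p.1 ∉ T → α p = 0) ∧
        (∀ p : Fin d × Fin m, p.1 ∉ T → β p = 0) ∧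
        (∑ p, (α p) ^ 2 = 1) ∧ (∑ p, (β p) ^ 2 = 1) ∧
        r = |α ⬝ᵥ ((Shat - Spop).mulVec β)|}) :
    |κhatSq - κSq| ≤ 23 ^ 2 * sSup {r : ℝ |
      ∃ T : Finset (Fin d), T.card ≤ 2 * sstar ∧ r = N T} := by
  set M := sSup {r : ℝ | ∃ T : Finset (Fin d), T.card ≤ 2 * sstar ∧ r = N T}
  have hN' (T : Finset (Fin d)) : N T = blockOpNorm (Shat - Spop) T := hN T
  have hM : ∀ T : Finset (Fin d), T.card ≤ 2 * sstar → blockOpNorm (Shat - Spop) T ≤ M :=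
    fun T hT => hN' T ▸ le_csSup ⟨_, by
      rintro _ ⟨T', -, rfl⟩
      exact (hN' T').trans_le (blockOpNorm_le_sum_abs _ T')⟩ ⟨T, hT, rfl⟩
  have hquad : ∀ α ∈ {α | α ∈ C ∧ ∑ p, α p ^ 2 = 1},
      |α ⬝ᵥ Shat *ᵥ α - α ⬝ᵥ Spop *ᵥ α| ≤ 23 ^ 2 * M := by
    rintro α ⟨hαC, hα⟩
    rw [hC] at hαC
    have hdec := hasBlockSparseDecomp_of_cone (κ := Fin m) hTstar (by norm_num) hαC
    rw [l2Norm_eq_one hα] at hdec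
    rw [← dotProduct_sub, ← sub_mulVec]
    convert hdec.abs_dotProduct_mulVec_le _ hM hdec using 1
    norm_num
  have himage (S : Matrix (Fin d × Fin m) (Fin d × Fin m) ℝ) :
      {r : ℝ | ∃ α ∈ C, (∑ p, (α p) ^ 2 = 1) ∧ r = α ⬝ᵥ S.mulVec α} =
        (fun α => α ⬝ᵥ S *ᵥ α) '' {α | α ∈ C ∧ ∑ p, α p ^ 2 = 1} :=
    Set.ext fun r => by simp [and_assoc, eq_comm]
  rw [hκhat, hκ, himage, himage]
  exact abs_sInf_image_sub_sInf_image_le (hShat.bddBelow_image_dotProduct_mulVec _)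
    (hSpop.bddBelow_image_dotProduct_mulVec _)
    (mul_nonneg (by norm_num) ((blockOpNorm_nonneg _ ∅).trans (hM ∅ (by simp)))) hquad
end

section
/- Let f ∈ W_2^ν([0,1]) for a positive integer ν, and let Q be a probability measure on [0,1] such that the ν×ν moment matrix Σ_{Q,ν} = E_{Z∼Q}[(1, Z, ..., Z^{ν−1})'(1, Z, ..., Z^{ν−1})] is nonsingular. Then there exist functions f^{[1]} and f^{[2]} on [0,1] such that: (i) f = f^{[1]} + f^{[2]}; (ii) ||f^{[1]}||_∞ ≤ K·I(f^{[1]}) for a constant K depending only on Q and ν (not on f), where I(g)² = ∫_0^1 g^{(ν)}(z)² dz; (iii) f^{[2]} is a polynomial of degree at most ν−1; (iv) ∫ f^{[1]} f^{[2]} dQ = 0. -/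
/-!
Expanding `f` in its Taylor polynomial `T` of degree `ν - 1` at `0`, the remainder `r = f - T`
satisfies `|r| ≤ ∫₀¹ |f^(ν)| ≤ I(f)` on `[0, 1]` (integrate the `ν` derivatives one at a time, then
Cauchy–Schwarz). Let `p` be the `L²(Q)`-projection of `r` onto polynomials of degree `< ν`: its
coefficient vector is `Σ_{Q,ν}⁻¹ (∫ r zʲ dQ)_j`, so `|p| ≤ K₀ · I(f)` with `K₀ = ∑ |(Σ_{Q,ν}⁻¹)ᵢⱼ|`.
Then `f₁ = r - p` and `f₂ = T + p` work, with `K = 1 + K₀`, because subtracting a polynomial of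
degree `< ν` does not change the `ν`-th derivative.
-/

open MeasureTheory Set Polynomial Matrix
open scoped Nat

theorem integral_abs_le_sqrt_integral_sq {α : Type*} [MeasurableSpace α] {μ : Measure α}
    [IsProbabilityMeasure μ] {g : α → ℝ} (hg : MemLp g 2 μ) :
    ∫ x, |g x| ∂μ ≤ √(∫ x, g x ^ 2 ∂μ) := by
  have h := ProbabilityTheory.variance_nonneg |g| μ
  rw [ProbabilityTheory.variance_eq_sub hg.abs] at h
  simp only [Pi.pow_apply, Pi.abs_apply, sq_abs] at h
  exact Real.le_sqrt_of_sq_le (by linarith)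

theorem ContinuousOn.integrable_of_ae_mem {α E : Type*} [TopologicalSpace α] [T2Space α]
    [MeasurableSpace α] [OpensMeasurableSpace α] [NormedAddCommGroup E] {μ : Measure α}
    [IsFiniteMeasure μ] {K : Set α} (hK : IsCompact K) (hμ : ∀ᵐ x ∂μ, x ∈ K) {u : α → E}
    (hu : ContinuousOn u K) : Integrable u μ := by
  rw [← Measure.restrict_eq_self_of_ae_mem hμ]
  exact hu.integrableOn_compact hK

theorem abs_sub_le_integral_abs_of_hasDerivAt {g g' : ℝ → ℝ} {a b z : ℝ}
    (hcont : ContinuousOn g (Icc a b)) (hderiv : ∀ x ∈ Ioo a b, HasDerivAt g (g' x) x)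
    (hint : IntervalIntegrable g' volume a b) (hz : z ∈ Icc a b) :
    |g z - g a| ≤ ∫ x in a..b, |g' x| := by
  have hsub : uIcc a z ⊆ uIcc a b := by
    rw [uIcc_of_le hz.1, uIcc_of_le (hz.1.trans hz.2)]
    exact Icc_subset_Icc_right hz.2
  rw [← intervalIntegral.integral_eq_sub_of_hasDerivAt_of_le hz.1
    (hcont.mono (Icc_subset_Icc_right hz.2)) (fun x hx => hderiv x ⟨hx.1, hx.2.trans_le hz.2⟩)
    (hint.mono_set hsub)]
  exact (intervalIntegral.abs_integral_le_integral_abs hz.1).trans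
    (intervalIntegral.integral_mono_interval le_rfl hz.1 hz.2
      (Filter.Eventually.of_forall fun x => abs_nonneg _) hint.abs)

theorem iteratedDeriv_sub_eval_eqOn {f : ℝ → ℝ} {s : Set ℝ} (hs : IsOpen s) {n : ℕ}
    (hf : ∀ k < n, DifferentiableOn ℝ (iteratedDeriv k f) s) (q : ℝ[X]) :
    EqOn (iteratedDeriv n fun x => f x - q.eval x)
      (fun x => iteratedDeriv n f x - (derivative^[n] q).eval x) s := by
  induction n with
  | zero => intro x _; simp
  | succ n ih =>
    intro x hx
    have hfx := (hf n n.lt_succ_self).differentiableAt (hs.mem_nhds hx)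
    rw [iteratedDeriv_succ, ((ih fun k hk => hf k (by omega)).eventuallyEq_of_mem
      (hs.mem_nhds hx)).deriv_eq, deriv_fun_sub hfx (Polynomial.differentiableAt _),
      Polynomial.deriv, iteratedDeriv_succ, Function.iterate_succ_apply']

theorem integral_sq_iteratedDeriv_sub_eval {f : ℝ → ℝ} {a b : ℝ} (hab : a ≤ b) {n : ℕ}
    (hf : ∀ k < n, DifferentiableOn ℝ (iteratedDeriv k f) (Icc a b)) {q : ℝ[X]}
    (hq : q.natDegree < n) :
    ∫ x in a..b, iteratedDeriv n (fun z => f z - q.eval z) x ^ 2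
      = ∫ x in a..b, iteratedDeriv n f x ^ 2 := by
  refine intervalIntegral.integral_congr_Ioo_of_le hab fun x hx => ?_
  rw [iteratedDeriv_sub_eval_eqOn isOpen_Ioo (fun k hk => (hf k hk).mono Ioo_subset_Icc_self) _ hx,
    iterate_derivative_eq_zero hq]
  simp

noncomputable def taylorPoly (n : ℕ) (f : ℝ → ℝ) : ℝ[X] :=
  ∑ k ∈ Finset.range n, C (iteratedDeriv k f 0 / k !) * X ^ k

theorem natDegree_taylorPoly_le (n : ℕ) (f : ℝ → ℝ) : (taylorPoly n f).natDegree ≤ n - 1 :=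
  natDegree_sum_le_of_forall_le _ _ fun k hk =>
    natDegree_C_mul_X_pow_le _ k |>.trans (by have := Finset.mem_range.mp hk; omega)

theorem eval_zero_taylorPoly_succ (n : ℕ) (f : ℝ → ℝ) :
    (taylorPoly (n + 1) f).eval 0 = f 0 := by
  simp [taylorPoly, Finset.sum_range_succ', eval_finsetSum]

theorem derivative_taylorPoly_succ (n : ℕ) (f : ℝ → ℝ) :
    derivative (taylorPoly (n + 1) f) = taylorPoly n (deriv f) := by
  rw [taylorPoly, derivative_sum, Finset.sum_range_succ', taylorPoly]
  simp only [derivative_C_mul_X_pow, Nat.cast_zero, mul_zero, C_0, zero_mul, add_zero,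
    Nat.add_sub_cancel, iteratedDeriv_succ', Nat.factorial_succ]
  refine Finset.sum_congr rfl fun k _ => ?_
  congr 2
  push_cast
  field_simp

theorem abs_sub_taylorPoly_le_integral_abs (n : ℕ) (f : ℝ → ℝ)
    (hf : ∀ k < n + 1, DifferentiableOn ℝ (iteratedDeriv k f) (Icc 0 1))
    (hint : IntervalIntegrable (iteratedDeriv (n + 1) f) volume 0 1) :
    ∀ z ∈ Icc (0 : ℝ) 1,
      |f z - (taylorPoly (n + 1) f).eval z| ≤ ∫ x in 0..1, |iteratedDeriv (n + 1) f x| := by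
  induction n generalizing f with
  | zero =>
    intro z hz
    have hf₀ : DifferentiableOn ℝ f (Icc 0 1) := by simpa using hf 0 one_pos
    rw [iteratedDeriv_one] at hint ⊢
    simpa [taylorPoly] using abs_sub_le_integral_abs_of_hasDerivAt hf₀.continuousOn
      (fun x hx => (hf₀.differentiableAt (Icc_mem_nhds hx.1 hx.2)).hasDerivAt) hint hz
  | succ n ih =>
    intro z hz
    rw [iteratedDeriv_succ'] at hint ⊢
    have hf₀ : DifferentiableOn ℝ f (Icc 0 1) := by simpa using hf 0 (by omega)
    have hf₁ : DifferentiableOn ℝ (deriv f) (Icc 0 1) := by simpa using hf 1 (by omega)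
    have hderiv_bound := ih (deriv f)
      (fun k hk => iteratedDeriv_succ' (f := f) ▸ hf (k + 1) (by omega)) hint
    have hr : ∀ x ∈ Ioo (0 : ℝ) 1, HasDerivAt (fun x => f x - (taylorPoly (n + 2) f).eval x)
        (deriv f x - (taylorPoly (n + 1) (deriv f)).eval x) x := fun x hx => by
      rw [← derivative_taylorPoly_succ]
      exact (hf₀.differentiableAt (Icc_mem_nhds hx.1 hx.2)).hasDerivAt.sub
        (Polynomial.hasDerivAt _ x)
    have hr' : IntervalIntegrable (fun x => deriv f x - (taylorPoly (n + 1) (deriv f)).eval x)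
        volume 0 1 :=
      (hf₁.continuousOn.sub (Polynomial.continuousOn _)).intervalIntegrable_of_Icc zero_le_one
    calc |f z - (taylorPoly (n + 2) f).eval z|
        = |(f z - (taylorPoly (n + 2) f).eval z) - (f 0 - (taylorPoly (n + 2) f).eval 0)| := by
          rw [eval_zero_taylorPoly_succ, sub_self, sub_zero]
      _ ≤ ∫ x in 0..1, |deriv f x - (taylorPoly (n + 1) (deriv f)).eval x| :=
          abs_sub_le_integral_abs_of_hasDerivAt
            (hf₀.continuousOn.sub (Polynomial.continuousOn _)) hr hr' hz
      _ ≤ ∫ _ in (0 : ℝ)..1, ∫ x in 0..1, |iteratedDeriv (n + 1) (deriv f) x| :=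
          intervalIntegral.integral_mono_on zero_le_one hr'.abs intervalIntegrable_const
            hderiv_bound
      _ = ∫ x in 0..1, |iteratedDeriv (n + 1) (deriv f) x| := by simp

theorem abs_sub_taylorPoly_le_sqrt_integral_sq (n : ℕ) (f : ℝ → ℝ)
    (hf : ∀ k < n + 1, DifferentiableOn ℝ (iteratedDeriv k f) (Icc 0 1))
    (hint : IntervalIntegrable (fun x => iteratedDeriv (n + 1) f x ^ 2) volume 0 1) :
    ∀ z ∈ Icc (0 : ℝ) 1,
      |f z - (taylorPoly (n + 1) f).eval z| ≤ √(∫ x in 0..1, iteratedDeriv (n + 1) f x ^ 2) := by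
  have : IsProbabilityMeasure (volume.restrict (Ioc (0 : ℝ) 1)) := ⟨by simp⟩
  have hmeas : Measurable (iteratedDeriv (n + 1) f) := by
    rw [iteratedDeriv_succ]; exact measurable_deriv _
  have hL2 : MemLp (iteratedDeriv (n + 1) f) 2 (volume.restrict (Ioc 0 1)) :=
    (memLp_two_iff_integrable_sq hmeas.aestronglyMeasurable).mpr hint.1
  intro z hz
  refine (abs_sub_taylorPoly_le_integral_abs n f hf
    ((intervalIntegrable_iff_integrableOn_Ioc_of_le zero_le_one).mpr
      (hL2.integrable one_le_two)) z hz).trans ?_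
  simpa only [intervalIntegral.integral_of_le zero_le_one] using
    integral_abs_le_sqrt_integral_sq hL2

noncomputable def momentMatrix (Q : Measure ℝ) (ν : ℕ) : Matrix (Fin ν) (Fin ν) ℝ :=
  Matrix.of fun i j : Fin ν => ∫ z, z ^ ((i : ℕ) + (j : ℕ)) ∂Q

noncomputable def polyProjectionCoeff (Q : Measure ℝ) (ν : ℕ) (r : ℝ → ℝ) : Fin ν → ℝ :=
  (momentMatrix Q ν)⁻¹ *ᵥ fun j => ∫ z, r z * z ^ (j : ℕ) ∂Q

noncomputable def polyProjection (Q : Measure ℝ) (ν : ℕ) (r : ℝ → ℝ) : ℝ[X] :=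
  ∑ i : Fin ν, C (polyProjectionCoeff Q ν r i) * X ^ (i : ℕ)

noncomputable def polyProjectionBound (Q : Measure ℝ) (ν : ℕ) : ℝ :=
  ∑ i, ∑ j, |(momentMatrix Q ν)⁻¹ i j|

section polyProjection

variable {Q : Measure ℝ} {ν : ℕ} {r : ℝ → ℝ}

theorem eval_polyProjection (z : ℝ) :
    (polyProjection Q ν r).eval z = ∑ i : Fin ν, polyProjectionCoeff Q ν r i * z ^ (i : ℕ) := by
  simp [polyProjection, eval_finsetSum]

theorem natDegree_polyProjection_le : (polyProjection Q ν r).natDegree ≤ ν - 1 :=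
  natDegree_sum_le_of_forall_le _ _ fun i _ =>
    natDegree_C_mul_X_pow_le _ _ |>.trans (by omega)

theorem polyProjectionBound_nonneg : 0 ≤ polyProjectionBound Q ν := by
  unfold polyProjectionBound; positivity

theorem integrable_eval_polyProjection_mul_pow (hmom : ∀ n : ℕ, Integrable (fun z => z ^ n) Q)
    (n : ℕ) : Integrable (fun z => (polyProjection Q ν r).eval z * z ^ n) Q := by
  simpa only [eval_polyProjection, Finset.sum_mul, mul_assoc, ← pow_add] using
    integrable_finsetSum _ fun i _ => (hmom _).const_mul _

theorem integral_sub_polyProjection_mul_pow (hdet : (momentMatrix Q ν).det ≠ 0)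
    (hmom : ∀ n : ℕ, Integrable (fun z => z ^ n) Q)
    (hr : ∀ n : ℕ, Integrable (fun z => r z * z ^ n) Q) (j : Fin ν) :
    ∫ z, (r z - (polyProjection Q ν r).eval z) * z ^ (j : ℕ) ∂Q = 0 := by
  have hproj : ∫ z, (polyProjection Q ν r).eval z * z ^ (j : ℕ) ∂Q
      = (momentMatrix Q ν *ᵥ polyProjectionCoeff Q ν r) j := by
    simp only [eval_polyProjection, Finset.sum_mul, mul_assoc, ← pow_add]
    rw [integral_finsetSum _ fun i _ => (hmom _).const_mul _]
    simp only [integral_const_mul, Matrix.mulVec, dotProduct, momentMatrix, Matrix.of_apply]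
    exact Finset.sum_congr rfl fun i _ => by rw [add_comm, mul_comm]
  rw [polyProjectionCoeff, Matrix.mulVec_mulVec,
    Matrix.mul_nonsing_inv _ (isUnit_iff_ne_zero.mpr hdet), Matrix.one_mulVec] at hproj
  simp only [sub_mul]
  rw [integral_sub (hr j) (integrable_eval_polyProjection_mul_pow hmom j), hproj, sub_self]

theorem integral_sub_polyProjection_mul_eval (hdet : (momentMatrix Q ν).det ≠ 0)
    (hmom : ∀ n : ℕ, Integrable (fun z => z ^ n) Q)
    (hr : ∀ n : ℕ, Integrable (fun z => r z * z ^ n) Q) {q : ℝ[X]} (hq : q.natDegree < ν) :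
    ∫ z, (r z - (polyProjection Q ν r).eval z) * q.eval z ∂Q = 0 := by
  have hrp (n : ℕ) : Integrable (fun z => (r z - (polyProjection Q ν r).eval z) * z ^ n) Q := by
    simpa only [sub_mul, Pi.sub_def] using
      (hr n).sub (integrable_eval_polyProjection_mul_pow hmom n)
  simp only [eval_eq_sum_range' hq, Finset.mul_sum, mul_left_comm _ (q.coeff _)]
  rw [integral_finsetSum _ fun i _ => (hrp i).const_mul _]
  refine Finset.sum_eq_zero fun i hi => ?_
  rw [integral_const_mul, integral_sub_polyProjection_mul_pow hdet hmom hr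
    ⟨i, Finset.mem_range.mp hi⟩, mul_zero]

theorem abs_eval_polyProjection_le [IsProbabilityMeasure Q] (hQ : ∀ᵐ z ∂Q, z ∈ Icc (0 : ℝ) 1)
    {M : ℝ} (hr : ∀ z ∈ Icc (0 : ℝ) 1, |r z| ≤ M) {z : ℝ} (hz : z ∈ Icc (0 : ℝ) 1) :
    |(polyProjection Q ν r).eval z| ≤ polyProjectionBound Q ν * M := by
  have hpow : ∀ {x : ℝ}, x ∈ Icc (0 : ℝ) 1 → ∀ n : ℕ, |x ^ n| ≤ 1 := fun hx n => by
    rw [abs_pow, abs_of_nonneg hx.1]; exact pow_le_one₀ hx.1 hx.2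
  have hM : 0 ≤ M := (abs_nonneg _).trans (hr 0 (left_mem_Icc.mpr zero_le_one))
  have hmoment : ∀ j : Fin ν, |∫ x, r x * x ^ (j : ℕ) ∂Q| ≤ M := fun j => by
    simpa using norm_integral_le_of_norm_le_const (μ := Q) (f := fun x => r x * x ^ (j : ℕ))
      (hQ.mono fun x hx => by
        rw [Real.norm_eq_abs, abs_mul]
        exact (mul_le_mul (hr x hx) (hpow hx j) (abs_nonneg _) hM).trans_eq (mul_one M))
  have hcoeff : ∀ i, |polyProjectionCoeff Q ν r i| ≤ ∑ j, |(momentMatrix Q ν)⁻¹ i j| * M :=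
    fun i => by
      change |∑ j, (momentMatrix Q ν)⁻¹ i j * ∫ x, r x * x ^ (j : ℕ) ∂Q| ≤ _
      refine (Finset.abs_sum_le_sum_abs _ _).trans (Finset.sum_le_sum fun j _ => ?_)
      rw [abs_mul]; exact mul_le_mul_of_nonneg_left (hmoment j) (abs_nonneg _)
  calc |(polyProjection Q ν r).eval z|
      ≤ ∑ i, |polyProjectionCoeff Q ν r i * z ^ (i : ℕ)| := by
        rw [eval_polyProjection]; exact Finset.abs_sum_le_sum_abs _ _
    _ ≤ ∑ i, ∑ j, |(momentMatrix Q ν)⁻¹ i j| * M := Finset.sum_le_sum fun i _ => by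
        rw [abs_mul]
        exact (mul_le_of_le_one_right (abs_nonneg _) (hpow hz i)).trans (hcoeff i)
    _ = polyProjectionBound Q ν * M := by simp only [polyProjectionBound, Finset.sum_mul]

end polyProjection

/-- decomposition of a Sobolev function `f ∈ W₂^ν([0,1])` as
`f = f¹ + f²` with `‖f¹‖_∞ ≤ K · I(f¹)`, `f²` a polynomial of degree ≤ ν−1,
and `∫ f¹ f² dQ = 0`, where `Q` is a probability measure on `[0,1]` whose
moment matrix `Σ_{Q,ν}` is nonsingular; the constant `K` depends only on `Q`
and `ν`.  Membership in `W₂^ν([0,1])` is formalized by requiring that the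
iterated derivatives of order `< ν` exist on `[0,1]` and that the `ν`-th
derivative is square-integrable on `[0,1]`. -/
theorem stmt_4
    (ν : ℕ) (hν : 0 < ν)
    (Q : Measure ℝ) [IsProbabilityMeasure Q]
    (hQsupp : Q (Set.Icc (0 : ℝ) 1)ᶜ = 0)
    (hdet : (Matrix.of fun i j : Fin ν =>
      ∫ z, z ^ ((i : ℕ) + (j : ℕ)) ∂Q).det ≠ 0) :
    ∃ K > 0, ∀ f : ℝ → ℝ,
      (∀ k < ν, DifferentiableOn ℝ (iteratedDeriv k f) (Set.Icc (0 : ℝ) 1)) →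
      IntervalIntegrable (fun z => (iteratedDeriv ν f z) ^ 2) volume 0 1 →
      ∃ f₁ f₂ : ℝ → ℝ,
        (∀ z ∈ Set.Icc (0 : ℝ) 1, f z = f₁ z + f₂ z) ∧
        (∀ z ∈ Set.Icc (0 : ℝ) 1,
          |f₁ z| ≤ K * Real.sqrt (∫ z in (0 : ℝ)..1, (iteratedDeriv ν f₁ z) ^ 2)) ∧
        (∃ p : Polynomial ℝ, p.natDegree ≤ ν - 1 ∧ ∀ z, f₂ z = p.eval z) ∧
        (∫ z, f₁ z * f₂ z ∂Q) = 0 := by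
  obtain ⟨n, rfl⟩ : ∃ n, ν = n + 1 := ⟨ν - 1, by omega⟩
  have hQ : ∀ᵐ z ∂Q, z ∈ Icc (0 : ℝ) 1 := mem_ae_iff.mpr hQsupp
  refine ⟨1 + polyProjectionBound Q (n + 1), add_pos_of_pos_of_nonneg one_pos
    polyProjectionBound_nonneg, fun f hf hint => ?_⟩
  set T := taylorPoly (n + 1) f
  set r := fun z => f z - T.eval z
  set p := polyProjection Q (n + 1) r
  have hr_le := abs_sub_taylorPoly_le_sqrt_integral_sq n f hf hint
  have hrcont : ContinuousOn r (Icc 0 1) :=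
    (iteratedDeriv_zero (f := f) ▸ (hf 0 n.succ_pos).continuousOn).sub T.continuousOn
  have hdeg : (T + p).natDegree < n + 1 := (natDegree_add_le _ _).trans_lt <|
    Nat.lt_succ_of_le (max_le (natDegree_taylorPoly_le _ _) natDegree_polyProjection_le)
  have hf₁ : ∀ z, f z - (T + p).eval z = r z - p.eval z := fun z => by
    simp only [r, eval_add]; ring
  refine ⟨fun z => f z - (T + p).eval z, fun z => (T + p).eval z, fun z _ => by ring,
    fun z hz => ?_, ⟨T + p, by omega, fun z => rfl⟩, ?_⟩
  · dsimp only
    rw [integral_sq_iteratedDeriv_sub_eval zero_le_one hf hdeg, hf₁]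
    calc |r z - p.eval z| ≤ |r z| + |p.eval z| := abs_sub _ _
      _ ≤ _ + polyProjectionBound Q (n + 1) * _ :=
        add_le_add (hr_le z hz) (abs_eval_polyProjection_le hQ hr_le hz)
      _ = _ := by ring
  · simp only [hf₁]
    exact integral_sub_polyProjection_mul_eval hdet
      (fun k => (continuous_pow k).continuousOn.integrable_of_ae_mem isCompact_Icc hQ)
      (fun k => (hrcont.mul (continuous_pow k).continuousOn).integrable_of_ae_mem isCompact_Icc hQ)
      hdeg
end
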